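/- arXiv:2102.13203 — 4 statements merged into one kernel-verified Lean document; each statement's English description precedes it below -/
import Mathlib

section
/- Let r > 0, L > 0, and let h : [-r, r] → ℂ be L-Lipschitz (|h(s) - h(t)| ≤ L|s - t| for all s, t ∈ [-r, r]). Set Δ := max_{|t| ≤ r} |h(t) - h(0)| and assume Δ > 0. Let θ ∈ (0,1) and δ > 0 satisfy max_{|t| ≤ r} |h(t) - h(θt)| ≤ δ ≤ Δ/2. Then 1 - θ < ln(2Lr/Δ) / ⌊Δ/(2δ)⌋. -/
/-- Quantitative self-similarity lemma: if an `L`-Lipschitz function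
`h : [-r,r] → ℂ` with oscillation `Δ = max_{|t| ≤ r} |h(t) - h(0)| > 0` satisfies
`max_{|t| ≤ r} |h(t) - h(θ t)| ≤ δ ≤ Δ/2` for some `θ ∈ (0,1)`, then
`1 - θ < ln(2Lr/Δ) / ⌊Δ/(2δ)⌋`. -/
theorem stmt0 (r L : ℝ) (hr : 0 < r) (hL : 0 < L) (h : ℝ → ℂ)
    (hlip : ∀ s t : ℝ, |s| ≤ r → |t| ≤ r → ‖h s - h t‖ ≤ L * |s - t|)
    (Δ : ℝ)
    (hΔ : IsGreatest {y : ℝ | ∃ t : ℝ, |t| ≤ r ∧ y = ‖h t - h 0‖} Δ)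
    (hΔpos : 0 < Δ)
    (θ δ : ℝ) (hθ : θ ∈ Set.Ioo (0 : ℝ) 1) (hδ : 0 < δ)
    (hbd : ∀ t : ℝ, |t| ≤ r → ‖h t - h (θ * t)‖ ≤ δ)
    (hδΔ : δ ≤ Δ / 2) :
    1 - θ < Real.log (2 * L * r / Δ) / (⌊Δ / (2 * δ)⌋ : ℝ) := by
  obtain ⟨hθ0, hθ1⟩ := hθ
  obtain ⟨⟨t₀, ht₀r, ht₀eq⟩, _⟩ := hΔ
  -- bound on |θ^k * t₀|
  have habs : ∀ k : ℕ, |θ ^ k * t₀| ≤ r := by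
    intro k
    rw [abs_mul]
    calc |θ ^ k| * |t₀| ≤ 1 * |t₀| := by
          apply mul_le_mul_of_nonneg_right _ (abs_nonneg _)
          rw [abs_of_nonneg (pow_nonneg hθ0.le k)]
          exact pow_le_one₀ hθ0.le hθ1.le
      _ = |t₀| := one_mul _
      _ ≤ r := ht₀r
  -- telescoping bound
  have htel : ∀ k : ℕ, ‖h (θ ^ k * t₀) - h t₀‖ ≤ k * δ := by
    intro k
    induction k with
    | zero => simp
    | succ k ih =>
      have h1 : ‖h (θ ^ (k+1) * t₀) - h (θ ^ k * t₀)‖ ≤ δ := by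
        have := hbd (θ ^ k * t₀) (habs k)
        have heq : θ * (θ ^ k * t₀) = θ ^ (k+1) * t₀ := by ring
        rw [heq] at this
        calc ‖h (θ ^ (k+1) * t₀) - h (θ ^ k * t₀)‖
            = ‖h (θ ^ k * t₀) - h (θ ^ (k+1) * t₀)‖ := by
              rw [← norm_neg]; ring_nf
          _ ≤ δ := this
      calc ‖h (θ ^ (k+1) * t₀) - h t₀‖
          ≤ ‖h (θ ^ (k+1) * t₀) - h (θ ^ k * t₀)‖
            + ‖h (θ ^ k * t₀) - h t₀‖ := by
            have := norm_sub_le_norm_sub_add_norm_sub (h (θ ^ (k+1) * t₀)) (h (θ ^ k * t₀)) (h t₀)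
            exact this
        _ ≤ δ + k * δ := add_le_add h1 ih
        _ = (k + 1 : ℕ) * δ := by push_cast; ring
  set N : ℤ := ⌊Δ / (2 * δ)⌋ with hN
  have hN1 : 1 ≤ N := by
    apply Int.le_floor.mpr
    push_cast
    rw [le_div_iff₀ (by linarith)]
    linarith
  set n : ℕ := N.toNat with hn
  have hNn : (N : ℝ) = (n : ℝ) := by
    rw [hn]
    exact_mod_cast (Int.toNat_of_nonneg (by linarith)).symm
  have hn1 : 1 ≤ n := by omega
  -- n * δ ≤ Δ / 2
  have hnd : (n : ℝ) * δ ≤ Δ / 2 := by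
    have : (N : ℝ) ≤ Δ / (2 * δ) := Int.floor_le _
    rw [hNn] at this
    rw [le_div_iff₀ (by linarith)] at this
    linarith
  -- main chain: Δ ≤ n δ + L θ^n r
  have hlipb : ‖h (θ ^ n * t₀) - h 0‖ ≤ L * (θ ^ n * r) := by
    have := hlip (θ ^ n * t₀) 0 (habs n) (by simp [abs_of_nonneg, hr.le])
    calc ‖h (θ ^ n * t₀) - h 0‖ ≤ L * |θ ^ n * t₀ - 0| := this
      _ = L * (θ ^ n * |t₀|) := by
          rw [sub_zero, abs_mul, abs_of_nonneg (pow_nonneg hθ0.le n)]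
      _ ≤ L * (θ ^ n * r) := by
          apply mul_le_mul_of_nonneg_left _ hL.le
          exact mul_le_mul_of_nonneg_left ht₀r (pow_nonneg hθ0.le n)
  have hmain : Δ ≤ (n : ℝ) * δ + L * (θ ^ n * r) := by
    calc Δ = ‖h t₀ - h 0‖ := ht₀eq
      _ ≤ ‖h t₀ - h (θ ^ n * t₀)‖ + ‖h (θ ^ n * t₀) - h 0‖ :=
          norm_sub_le_norm_sub_add_norm_sub _ _ _
      _ ≤ (n : ℝ) * δ + L * (θ ^ n * r) := by
          apply add_le_add _ hlipb
          calc ‖h t₀ - h (θ ^ n * t₀)‖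
              = ‖h (θ ^ n * t₀) - h t₀‖ := by
                rw [← norm_neg]; ring_nf
            _ ≤ (n : ℝ) * δ := htel n
  -- so Δ/2 ≤ L r θ^n
  have hkey : Δ / (2 * L * r) ≤ θ ^ n := by
    rw [div_le_iff₀ (by positivity)]
    nlinarith
  have hpos : 0 < Δ / (2 * L * r) := by positivity
  have hlog : Real.log (Δ / (2 * L * r)) ≤ (n : ℝ) * Real.log θ := by
    calc Real.log (Δ / (2 * L * r)) ≤ Real.log (θ ^ n) := Real.log_le_log hpos hkey
      _ = (n : ℝ) * Real.log θ := by rw [Real.log_pow]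
  have hlogdiv : Real.log (Δ / (2 * L * r)) = - Real.log (2 * L * r / Δ) := by
    rw [← Real.log_inv]
    congr 1
    field_simp
  -- 1 - θ < - log θ
  have hlogθ : Real.log θ < θ - 1 := Real.log_lt_sub_one_of_pos hθ0 (ne_of_lt hθ1)
  have hfinal : (n : ℝ) * (1 - θ) < Real.log (2 * L * r / Δ) := by
    have h1 : (n : ℝ) * (1 - θ) < (n : ℝ) * (- Real.log θ) := by
      apply mul_lt_mul_of_pos_left _ (by exact_mod_cast hn1.trans_lt' (by norm_num) : (0:ℝ) < n)
      linarith
    have h2 : (n : ℝ) * (- Real.log θ) ≤ Real.log (2 * L * r / Δ) := by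
      rw [hlogdiv] at hlog
      linarith
    linarith
  rw [hNn, lt_div_iff₀ (by exact_mod_cast Nat.lt_of_lt_of_le Nat.zero_lt_one hn1)]
  linarith [hfinal]
end

section
/- Let 0 < r < R, let g : [-R, R] → ℝ be L-Lipschitz, let v₁, v₂ > 0, ω > 0, and let g̃₁, g̃₂ : [-1, 1] → ℝ satisfy |g̃ᵢ(t) - g(vᵢ t)| ≤ ω for all t with |t| ≤ min(1, R/vᵢ), i = 1, 2. Assume v₁ ∈ [r, R/2], v₂ ≥ v₁, and set λ° := v₂/v₁. Then for every λ ≥ 1 with |λ - λ°| ≤ min(ω/(RL), 1/2), one has max_{|t| ≤ 1} |g̃₁(t) - g̃₂(t/λ)| ≤ 3ω. -/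
set_option maxHeartbeats 800000


/-- (Embedding lemma, part (i).) If `g : [-R,R] → ℝ` is `L`-Lipschitz,
`g̃ᵢ` approximates `g(vᵢ·)` within `ω` on `|t| ≤ min(1, R/vᵢ)`, `v₁ ∈ [r, R/2]`,
`v₂ ≥ v₁ > 0`, and `λ ≥ 1` satisfies `|λ - v₂/v₁| ≤ min(ω/(RL), 1/2)`, then
`|g̃₁(t) - g̃₂(t/λ)| ≤ 3ω` for all `|t| ≤ 1`. -/
theorem stmt2 (r R L : ℝ) (hr : 0 < r) (hrR : r < R)
    (g : ℝ → ℝ)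
    (hlip : ∀ s t : ℝ, |s| ≤ R → |t| ≤ R → |g s - g t| ≤ L * |s - t|)
    (v₁ v₂ ω : ℝ) (hv₁ : 0 < v₁) (hv₂ : 0 < v₂) (hω : 0 < ω)
    (g₁ g₂ : ℝ → ℝ)
    (hg₁ : ∀ t : ℝ, |t| ≤ min 1 (R / v₁) → |g₁ t - g (v₁ * t)| ≤ ω)
    (hg₂ : ∀ t : ℝ, |t| ≤ min 1 (R / v₂) → |g₂ t - g (v₂ * t)| ≤ ω)
    (hv₁r : r ≤ v₁) (hv₁R : v₁ ≤ R / 2) (h12 : v₁ ≤ v₂)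
    (lam : ℝ) (hlam : 1 ≤ lam)
    (hclose : |lam - v₂ / v₁| ≤ min (ω / (R * L)) (1 / 2)) :
    ∀ t : ℝ, |t| ≤ 1 → |g₁ t - g₂ (t / lam)| ≤ 3 * ω := by
  intro t ht
  have hR : 0 < R := hr.trans hrR
  have hlampos : 0 < lam := lt_of_lt_of_le one_pos hlam
  have hL : 0 ≤ L := by
    have h := hlip R (-R) (by rw [abs_of_pos hR] ) (by rw [abs_neg, abs_of_pos hR])
    nlinarith [abs_nonneg (g R - g (-R)), abs_of_pos (show (0:ℝ) < R - (-R) by linarith)]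
  have hclose2 : |lam - v₂ / v₁| ≤ 1 / 2 := hclose.trans (min_le_right _ _)
  have habs := abs_le.mp hclose2
  -- lam ≥ v₂ / (2 * v₁)
  have hlo : v₂ / v₁ - 1 / 2 ≤ lam := by linarith [habs.1]
  have hratio1 : 1 ≤ v₂ / v₁ := (one_le_div hv₁).mpr h12
  have hlam_half : v₂ / (2 * v₁) ≤ lam := by
    have : v₂ / (2 * v₁) = (v₂ / v₁) / 2 := by ring
    rw [this]; linarith
  have hv2lam : v₂ ≤ 2 * v₁ * lam := by
    have := (div_le_iff₀ (by positivity)).mp hlam_half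
    linarith
  -- |t| ≤ min 1 (R / v₁)
  have ht1 : |t| ≤ min 1 (R / v₁) := by
    refine le_min ht (ht.trans ?_)
    rw [le_div_iff₀ hv₁]; linarith
  -- |t / lam| ≤ min 1 (R / v₂)
  have htl : |t / lam| ≤ min 1 (R / v₂) := by
    rw [abs_div, abs_of_pos hlampos]
    have h1 : |t| / lam ≤ 1 := by
      rw [div_le_one hlampos]; linarith
    refine le_min h1 ?_
    rw [div_le_div_iff₀ hlampos hv₂]
    calc |t| * v₂ ≤ 1 * (2 * v₁ * lam) := by
          apply mul_le_mul ht hv2lam hv₂.le one_pos.le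
      _ ≤ R * lam := by nlinarith
  have hA := hg₁ t ht1
  have hB := hg₂ (t / lam) htl
  -- Lipschitz bound on middle term
  have hs1 : |v₁ * t| ≤ R := by
    rw [abs_mul, abs_of_pos hv₁]; nlinarith
  have hs2 : |v₂ * (t / lam)| ≤ R := by
    rw [abs_mul, abs_div, abs_of_pos hv₂, abs_of_pos hlampos, mul_div_assoc',
      div_le_iff₀ hlampos]
    nlinarith [abs_nonneg t]
  have hmid := hlip (v₁ * t) (v₂ * (t / lam)) hs1 hs2
  have hkey : v₁ * t - v₂ * (t / lam) = (v₁ * t / lam) * (lam - v₂ / v₁) := by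
    field_simp
  have hmidbound : L * |v₁ * t - v₂ * (t / lam)| ≤ ω := by
    rw [hkey, abs_mul]
    have h1 : |v₁ * t / lam| ≤ v₁ := by
      rw [abs_div, abs_mul, abs_of_pos hv₁, abs_of_pos hlampos, div_le_iff₀ hlampos]
      nlinarith [abs_nonneg t]
    rcases eq_or_lt_of_le hL with hL0 | hLpos
    · have : L = 0 := hL0.symm
      rw [this]; nlinarith [abs_nonneg (v₁ * t / lam), abs_nonneg (lam - v₂ / v₁)]
    · have hclose1 : |lam - v₂ / v₁| ≤ ω / (R * L) := hclose.trans (min_le_left _ _)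
      have h2 : L * (v₁ * |lam - v₂ / v₁|) ≤ ω := by
        have h3 : |lam - v₂ / v₁| * (R * L) ≤ ω :=
          (le_div_iff₀ (by positivity)).mp hclose1
        nlinarith [abs_nonneg (lam - v₂ / v₁)]
      calc L * (|v₁ * t / lam| * |lam - v₂ / v₁|)
          ≤ L * (v₁ * |lam - v₂ / v₁|) := by
            apply mul_le_mul_of_nonneg_left _ hL
            exact mul_le_mul_of_nonneg_right h1 (abs_nonneg _)
        _ ≤ ω := h2
  have hmid' : |g (v₁ * t) - g (v₂ * (t / lam))| ≤ ω := hmid.trans hmidbound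
  calc |g₁ t - g₂ (t / lam)|
      = |(g₁ t - g (v₁ * t)) + (g (v₁ * t) - g (v₂ * (t / lam)))
          + (g (v₂ * (t / lam)) - g₂ (t / lam))| := by ring_nf
    _ ≤ |(g₁ t - g (v₁ * t)) + (g (v₁ * t) - g (v₂ * (t / lam)))|
          + |g (v₂ * (t / lam)) - g₂ (t / lam)| := abs_add_le _ _
    _ ≤ |g₁ t - g (v₁ * t)| + |g (v₁ * t) - g (v₂ * (t / lam))|
          + |g (v₂ * (t / lam)) - g₂ (t / lam)| := by
            have := abs_add_le (g₁ t - g (v₁ * t)) (g (v₁ * t) - g (v₂ * (t / lam)))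
            linarith
    _ ≤ ω + ω + ω := by
          have hB' : |g (v₂ * (t / lam)) - g₂ (t / lam)| ≤ ω := by
            rw [abs_sub_comm]; exact hB
          linarith
    _ = 3 * ω := by ring
end

section
/- Let 0 < r < R, let g : [-R, R] → ℝ be L-Lipschitz, let v₁, v₂ > 0, ω > 0, and let g̃₁, g̃₂ : [-1, 1] → ℝ satisfy |g̃ᵢ(t) - g(vᵢ t)| ≤ ω for all t with |t| ≤ min(1, R/vᵢ), i = 1, 2. Assume v₁ ∈ [r, R/2], and set λ° := v₂/v₁. Let λ ≥ 1 and ν > 0 satisfy Lν·max(v₁, v₂) ≤ ω, and suppose the grid embedding holds: |g̃₁(kν) - g̃₂(kν/λ)| ≤ 3ω for every integer k with |kν| ≤ 1. If Δ_r := max_{|t| ≤ r} |g(t) - g(0)| ≥ 14ω, then |λ - λ°| / max(λ, λ°) ≤ 28·ω·Δ_r⁻¹·ln(2Lr/Δ_r). -/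
lemma grid_pt (ν x : ℝ) (hν : 0 < ν) :
    ∃ k : ℤ, |(k : ℝ) * ν| ≤ |x| ∧ |(k : ℝ) * ν - x| ≤ ν := by
  rcases le_or_gt 0 x with h | h
  · refine ⟨⌊x / ν⌋, ?_, ?_⟩
    · have h0 : (0:ℝ) ≤ (⌊x / ν⌋ : ℝ) := by
        exact_mod_cast Int.floor_nonneg.2 (div_nonneg h hν.le)
      have h1 : ((⌊x / ν⌋ : ℝ)) * ν ≤ x := (le_div_iff₀ hν).mp (Int.floor_le _)
      rw [abs_of_nonneg (by positivity), abs_of_nonneg h]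
      exact h1
    · have h1 : ((⌊x / ν⌋ : ℝ)) * ν ≤ x := (le_div_iff₀ hν).mp (Int.floor_le _)
      have h2 : x / ν < (⌊x / ν⌋ : ℝ) + 1 := Int.lt_floor_add_one _
      have h3 : x < ((⌊x / ν⌋ : ℝ) + 1) * ν := (div_lt_iff₀ hν).mp h2
      rw [abs_le]
      constructor <;> nlinarith
  · refine ⟨⌈x / ν⌉, ?_, ?_⟩
    · have h0 : (⌈x / ν⌉ : ℝ) ≤ 0 := by
        exact_mod_cast Int.ceil_le.2 (by simpa using (le_of_lt (div_neg_of_neg_of_pos h hν)))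
      have h1 : x ≤ ((⌈x / ν⌉ : ℝ)) * ν := (div_le_iff₀ hν).mp (Int.le_ceil _)
      rw [abs_of_nonpos (by nlinarith), abs_of_neg h]
      linarith
    · have h1 : x ≤ ((⌈x / ν⌉ : ℝ)) * ν := (div_le_iff₀ hν).mp (Int.le_ceil _)
      have h2 : (⌈x / ν⌉ : ℝ) < x / ν + 1 := by
        have := Int.ceil_lt_add_one (x / ν); exact_mod_cast this
      have h3 : ((⌈x / ν⌉ : ℝ)) * ν < (x / ν + 1) * ν := by nlinarith
      have h4 : (x / ν + 1) * ν = x + ν := by field_simp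
      rw [abs_le]
      constructor <;> nlinarith


lemma abs_sub_le₅ (a b c d e f : ℝ) :
    |a - f| ≤ |a - b| + |b - c| + |c - d| + |d - e| + |e - f| := by
  have h1 := abs_sub_le a b f
  have h2 := abs_sub_le b c f
  have h3 := abs_sub_le c d f
  have h4 := abs_sub_le d e f
  linarith

set_option maxHeartbeats 1000000 in
lemma keyA (r R L : ℝ) (hr : 0 < r) (hrR : r < R)
    (g : ℝ → ℝ)
    (hlip : ∀ s t : ℝ, |s| ≤ R → |t| ≤ R → |g s - g t| ≤ L * |s - t|)
    (v₁ v₂ ω : ℝ) (hv₁ : 0 < v₁) (hv₂ : 0 < v₂)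
    (g₁ g₂ : ℝ → ℝ)
    (hg₁ : ∀ t : ℝ, |t| ≤ min 1 (R / v₁) → |g₁ t - g (v₁ * t)| ≤ ω)
    (hg₂ : ∀ t : ℝ, |t| ≤ min 1 (R / v₂) → |g₂ t - g (v₂ * t)| ≤ ω)
    (hv₁r : r ≤ v₁) (hv₁R : v₁ ≤ R / 2)
    (lam ν : ℝ) (hlam : 1 ≤ lam) (hν : 0 < ν) (hL : 0 < L)
    (hνω : L * ν * max v₁ v₂ ≤ ω)
    (hgrid : ∀ k : ℤ, |(k : ℝ) * ν| ≤ 1 →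
      |g₁ ((k : ℝ) * ν) - g₂ ((k : ℝ) * ν / lam)| ≤ 3 * ω)
    (s : ℝ) (hs : |s| ≤ r) (hsμ : |s * v₂ / (lam * v₁)| ≤ r) :
    |g s - g (s * v₂ / (lam * v₁))| ≤ 7 * ω := by
  have hlam0 : (0:ℝ) < lam := lt_of_lt_of_le one_pos hlam
  obtain ⟨k, hk1, hk2⟩ := grid_pt ν (s / v₁) hν
  have hxabs : |s / v₁| ≤ 1 := by
    rw [abs_div, abs_of_pos hv₁, div_le_one hv₁]; linarith
  have hk1' : |(k : ℝ) * ν| ≤ 1 := hk1.trans hxabs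
  have hων : 0 ≤ ω := le_trans (by positivity) hνω
  -- bounds used for domains
  have hRv₁ : (1:ℝ) ≤ R / v₁ := by rw [le_div_iff₀ hv₁]; linarith
  have hkν₁ : |v₁ * ((k:ℝ) * ν)| ≤ R := by
    rw [abs_mul, abs_of_pos hv₁]
    nlinarith [abs_nonneg ((k:ℝ)*ν)]
  have hsR : |s| ≤ R := by linarith
  have hsμR : |s * v₂ / (lam * v₁)| ≤ R := by linarith
  -- |v₂ * (kν/lam)| ≤ |s v₂/(lam v₁)| ≤ r
  have habs2 : |v₂ * ((k:ℝ) * ν / lam)| ≤ |s * v₂ / (lam * v₁)| := by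
    have e1 : |v₂ * ((k:ℝ) * ν / lam)| = (v₂ / lam) * |(k:ℝ) * ν| := by
      rw [abs_mul, abs_div, abs_of_pos hv₂, abs_of_pos hlam0]; ring
    have e2 : |s * v₂ / (lam * v₁)| = (v₂ / lam) * |s / v₁| := by
      rw [abs_div, abs_mul, abs_mul, abs_div, abs_of_pos hv₂, abs_of_pos hlam0,
        abs_of_pos hv₁]
      field_simp
    rw [e1, e2]
    have : (0:ℝ) ≤ v₂ / lam := by positivity
    nlinarith
  -- piece 1 : |g s - g (v₁ k ν)| ≤ ω
  have p1 : |g s - g (v₁ * ((k:ℝ) * ν))| ≤ ω := by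
    have he : s - v₁ * ((k:ℝ) * ν) = -(v₁ * ((k:ℝ) * ν - s / v₁)) := by
      field_simp
      ring
    have hd : |s - v₁ * ((k:ℝ) * ν)| = v₁ * |(k:ℝ) * ν - s / v₁| := by
      rw [he, abs_neg, abs_mul, abs_of_pos hv₁]
    have := hlip s (v₁ * ((k:ℝ)*ν)) hsR hkν₁
    rw [hd] at this
    have hb : L * (v₁ * |(k:ℝ) * ν - s / v₁|) ≤ L * ν * v₁ := by
      nlinarith [mul_nonneg (mul_nonneg hL.le hv₁.le) (sub_nonneg.2 hk2)]
    have hc : L * ν * v₁ ≤ ω :=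
      le_trans (mul_le_mul_of_nonneg_left (le_max_left v₁ v₂) (by positivity)) hνω
    linarith
  -- piece 2
  have p2 : |g₁ ((k:ℝ) * ν) - g (v₁ * ((k:ℝ) * ν))| ≤ ω :=
    hg₁ _ (le_min hk1' (hk1'.trans hRv₁))
  -- piece 3
  have p3 : |g₁ ((k:ℝ) * ν) - g₂ ((k:ℝ) * ν / lam)| ≤ 3 * ω := hgrid k hk1'
  -- piece 4
  have p4 : |g₂ ((k:ℝ) * ν / lam) - g (v₂ * ((k:ℝ) * ν / lam))| ≤ ω := by
    apply hg₂
    refine le_min ?_ ?_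
    · rw [abs_div, abs_of_pos hlam0]
      calc |(k:ℝ)*ν| / lam ≤ |(k:ℝ)*ν| / 1 := by
            apply div_le_div_of_nonneg_left ?_ ?_ hlam <;> [exact abs_nonneg _; norm_num]
        _ ≤ 1 := by simpa using hk1'
    · -- |kν/lam| ≤ R / v₂  ⟺  v₂ |kν/lam| ≤ R, and v₂|kν/lam| = |v₂ (kν/lam)| ≤ r ≤ R
      rw [le_div_iff₀ hv₂]
      have : |v₂ * ((k:ℝ) * ν / lam)| = |(k:ℝ) * ν / lam| * v₂ := by
        rw [abs_mul, abs_of_pos hv₂]; ring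
      nlinarith [habs2, hsμ]
  -- piece 5
  have p5 : |g (v₂ * ((k:ℝ) * ν / lam)) - g (s * v₂ / (lam * v₁))| ≤ ω := by
    have hdom : |v₂ * ((k:ℝ) * ν / lam)| ≤ R := by linarith [habs2.trans hsμ]
    have := hlip _ _ hdom hsμR
    have hd : |v₂ * ((k:ℝ) * ν / lam) - s * v₂ / (lam * v₁)| =
        (v₂ / lam) * |(k:ℝ) * ν - s / v₁| := by
      rw [← abs_of_pos (show (0:ℝ) < v₂ / lam by positivity), ← abs_mul]
      congr 1
      field_simp
    rw [hd] at this
    have hb : L * ((v₂ / lam) * |(k:ℝ) * ν - s / v₁|) ≤ L * ν * v₂ := by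
      have h1 : v₂ / lam ≤ v₂ := by
        rw [div_le_iff₀ hlam0]; nlinarith
      have h2 : (0:ℝ) ≤ v₂ / lam := by positivity
      calc L * ((v₂ / lam) * |(k:ℝ) * ν - s / v₁|) ≤ L * ((v₂ / lam) * ν) :=
            mul_le_mul_of_nonneg_left (mul_le_mul_of_nonneg_left hk2 h2) hL.le
        _ ≤ L * (v₂ * ν) :=
            mul_le_mul_of_nonneg_left (mul_le_mul_of_nonneg_right h1 hν.le) hL.le
        _ = L * ν * v₂ := by ring
    have hc : L * ν * v₂ ≤ ω :=
      le_trans (mul_le_mul_of_nonneg_left (le_max_right v₁ v₂) (by positivity)) hνω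
    linarith
  -- triangle chain
  have p2' : |g (v₁ * ((k:ℝ) * ν)) - g₁ ((k:ℝ) * ν)| ≤ ω := by
    rw [abs_sub_comm]; exact p2
  have tri := abs_sub_le₅ (g s) (g (v₁ * ((k:ℝ) * ν))) (g₁ ((k:ℝ) * ν))
    (g₂ ((k:ℝ) * ν / lam)) (g (v₂ * ((k:ℝ) * ν / lam))) (g (s * v₂ / (lam * v₁)))
  linarith

lemma one_sub_inv_le_log' {x : ℝ} (hx : 0 < x) : 1 - x⁻¹ ≤ Real.log x :=
  Real.one_sub_inv_le_log_of_pos hx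

set_option maxHeartbeats 1000000 in
/-- (Embedding lemma, part (ii).) Under the approximation hypotheses on
`g̃₁, g̃₂`, with `v₁ ∈ [r, R/2]`, a grid embedding `|g̃₁(kν) - g̃₂(kν/λ)| ≤ 3ω`
(for `λ ≥ 1`, `Lν·max(v₁,v₂) ≤ ω`) and oscillation `Δ_r ≥ 14ω` forces
`|λ - λ°| / max(λ, λ°) ≤ 28·ω·Δ_r⁻¹·ln(2Lr/Δ_r)`, where `λ° = v₂/v₁`. -/
theorem stmt3 (r R L : ℝ) (hr : 0 < r) (hrR : r < R)
    (g : ℝ → ℝ)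
    (hlip : ∀ s t : ℝ, |s| ≤ R → |t| ≤ R → |g s - g t| ≤ L * |s - t|)
    (v₁ v₂ ω : ℝ) (hv₁ : 0 < v₁) (hv₂ : 0 < v₂) (hω : 0 < ω)
    (g₁ g₂ : ℝ → ℝ)
    (hg₁ : ∀ t : ℝ, |t| ≤ min 1 (R / v₁) → |g₁ t - g (v₁ * t)| ≤ ω)
    (hg₂ : ∀ t : ℝ, |t| ≤ min 1 (R / v₂) → |g₂ t - g (v₂ * t)| ≤ ω)
    (hv₁r : r ≤ v₁) (hv₁R : v₁ ≤ R / 2)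
    (lam ν : ℝ) (hlam : 1 ≤ lam) (hν : 0 < ν)
    (hνω : L * ν * max v₁ v₂ ≤ ω)
    (hgrid : ∀ k : ℤ, |(k : ℝ) * ν| ≤ 1 →
      |g₁ ((k : ℝ) * ν) - g₂ ((k : ℝ) * ν / lam)| ≤ 3 * ω)
    (Δr : ℝ)
    (hΔr : IsGreatest {y : ℝ | ∃ t : ℝ, |t| ≤ r ∧ y = |g t - g 0|} Δr)
    (hΔrω : 14 * ω ≤ Δr) :
    |lam - v₂ / v₁| / max lam (v₂ / v₁) ≤ 28 * ω * Δr⁻¹ * Real.log (2 * L * r / Δr) := by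
  have hlam0 : (0:ℝ) < lam := lt_of_lt_of_le one_pos hlam
  have hΔ0 : 0 < Δr := lt_of_lt_of_le (by positivity) hΔrω
  obtain ⟨t₀, ht₀r, ht₀eq⟩ := hΔr.1
  have hzR : |(0:ℝ)| ≤ R := by simp; linarith
  have ht₀R : |t₀| ≤ R := le_trans ht₀r (le_of_lt hrR)
  -- Δr ≤ L * r and L > 0
  have hΔt : Δr ≤ L * |t₀| := by
    have h1 := hlip t₀ 0 ht₀R hzR
    rw [sub_zero] at h1
    rw [ht₀eq]
    exact h1
  have hL : 0 < L := by
    by_contra hcon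
    push_neg at hcon
    nlinarith [mul_nonneg (neg_nonneg.2 hcon) (abs_nonneg t₀)]
  have hΔLr : Δr ≤ L * r :=
    le_trans hΔt (mul_le_mul_of_nonneg_left ht₀r hL.le)
  -- μ, σ, ρ
  set b : ℝ := v₂ / v₁ with hbdef
  have hb0 : 0 < b := by positivity
  set μ : ℝ := lam / b with hμdef
  have hμ0 : 0 < μ := by positivity
  set ρ : ℝ := max μ μ⁻¹ with hρdef
  have hρ1 : 1 ≤ ρ := by
    rcases le_total μ 1 with h | h
    · have : 1 ≤ μ⁻¹ := (one_le_inv_iff₀).2 ⟨hμ0, h⟩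
      exact le_trans this (le_max_right _ _)
    · exact le_trans h (le_max_left _ _)
  have hρ0 : 0 < ρ := lt_of_lt_of_le one_pos hρ1
  set σ : ℝ := min μ μ⁻¹ with hσdef
  have hσρ : σ = ρ⁻¹ := by
    have h1 : σ * ρ = 1 := by
      rw [hσdef, hρdef, min_mul_max, mul_inv_cancel₀ (ne_of_gt hμ0)]
    exact eq_inv_of_mul_eq_one_left h1
  have hσ0 : 0 < σ := by rw [hσρ]; positivity
  have hσ1 : σ ≤ 1 := by
    rw [hσρ]
    exact inv_le_one_of_one_le₀ hρ1
  -- the one-step bound in the useful form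
  have hμs : ∀ s : ℝ, s / μ = s * v₂ / (lam * v₁) := by
    intro s
    rw [hμdef, hbdef]
    field_simp
  have step : ∀ s : ℝ, |s| ≤ r → |s / μ| ≤ r → |g s - g (s / μ)| ≤ 7 * ω := by
    intro s h1 h2
    rw [hμs] at h2 ⊢
    exact keyA r R L hr hrR g hlip v₁ v₂ ω hv₁ hv₂ g₁ g₂ hg₁ hg₂ hv₁r hv₁R lam ν
      hlam hν hL hνω hgrid s h1 h2
  -- iteration
  have hσpow : ∀ n : ℕ, σ ^ n ≤ 1 := fun n => pow_le_one₀ hσ0.le hσ1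
  have hσpow0 : ∀ n : ℕ, 0 < σ ^ n := fun n => pow_pos hσ0 n
  have hiter_dom : ∀ n : ℕ, |σ ^ n * t₀| ≤ r := by
    intro n
    rw [abs_mul, abs_of_pos (hσpow0 n)]
    nlinarith [hσpow n, hσpow0 n, abs_nonneg t₀]
  have hstep' : ∀ n : ℕ, |g (σ ^ n * t₀) - g (σ ^ (n+1) * t₀)| ≤ 7 * ω := by
    intro n
    rcases le_total 1 μ with h | h
    · -- σ = μ⁻¹ : apply step with s = σ^n t₀
      have hσμ : σ = μ⁻¹ := by
        rw [hσdef, min_eq_right]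
        calc μ⁻¹ ≤ 1 := inv_le_one_of_one_le₀ h
          _ ≤ μ := h
      have hdiv : σ ^ n * t₀ / μ = σ ^ (n+1) * t₀ := by
        rw [hσμ, pow_succ, div_eq_mul_inv]; ring
      have := step (σ ^ n * t₀) (hiter_dom n) (by rw [hdiv]; exact hiter_dom (n+1))
      rwa [hdiv] at this
    · -- σ = μ : apply step with s = σ^(n+1) t₀
      have hσμ : σ = μ := by
        have h2 : 1 ≤ μ⁻¹ := (one_le_inv_iff₀).2 ⟨hμ0, h⟩
        rw [hσdef, min_eq_left (le_trans h h2)]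
      have hdiv : σ ^ (n+1) * t₀ / μ = σ ^ n * t₀ := by
        rw [hσμ, pow_succ, mul_comm (μ ^ n) μ, mul_assoc, mul_comm μ, mul_div_assoc,
          div_self (ne_of_gt hμ0), mul_one]
      have := step (σ ^ (n+1) * t₀) (hiter_dom (n+1)) (by rw [hdiv]; exact hiter_dom n)
      rw [hdiv] at this
      rwa [abs_sub_comm] at this
  have hiter : ∀ n : ℕ, |g t₀ - g (σ ^ n * t₀)| ≤ 7 * n * ω := by
    intro n
    induction n with
    | zero => simp
    | succ n ih =>
      have h1 := hstep' n
      have h2 := abs_sub_le (g t₀) (g (σ ^ n * t₀)) (g (σ ^ (n+1) * t₀))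
      push_cast
      push_cast at ih
      linarith
  have keyN : ∀ n : ℕ, Δr ≤ 7 * n * ω + L * r * σ ^ n := by
    intro n
    have hdom : |σ ^ n * t₀| ≤ R := le_trans (hiter_dom n) hrR.le
    have h1 := hlip (σ ^ n * t₀) 0 hdom hzR
    rw [sub_zero] at h1
    have h2 : L * |σ ^ n * t₀| ≤ L * r * σ ^ n := by
      rw [abs_mul, abs_of_pos (hσpow0 n)]
      nlinarith [mul_nonneg (mul_nonneg hL.le (hσpow0 n).le) (sub_nonneg.2 ht₀r)]
    have h3 := abs_sub_le (g t₀) (g (σ ^ n * t₀)) (g 0)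
    have h4 := hiter n
    rw [ht₀eq]
    linarith
  -- logs
  set K : ℝ := 2 * L * r / Δr with hKdef
  have hK2 : 2 ≤ K := by
    rw [hKdef, le_div_iff₀ hΔ0]
    linarith
  have hK0 : 0 < K := lt_of_lt_of_le two_pos hK2
  have hlogK : Real.log 2 ≤ Real.log K := Real.log_le_log two_pos hK2
  have hlog2 : (0.6931471803 : ℝ) < Real.log 2 := Real.log_two_gt_d9
  have hlogK0 : 0 < Real.log K := lt_of_lt_of_le (by linarith) hlogK
  -- LHS ≤ log ρ  and LHS ≤ 1
  have hμval : μ = lam / b := hμdef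
  have hLHS_logρ : |lam - b| / max lam b ≤ Real.log ρ := by
    have hlog1 : 1 - ρ⁻¹ ≤ Real.log ρ := Real.one_sub_inv_le_log_of_pos hρ0
    have : |lam - b| / max lam b ≤ 1 - ρ⁻¹ := by
      rcases le_total b lam with h | h
      · have hmax : max lam b = lam := max_eq_left h
        have hμ1 : 1 ≤ μ := by rw [hμdef, le_div_iff₀ hb0]; linarith
        have hρμ : ρ = μ := by
          rw [hρdef, max_eq_left]
          calc μ⁻¹ ≤ 1 := inv_le_one_of_one_le₀ hμ1
            _ ≤ μ := hμ1
        have hρinv : ρ⁻¹ = b / lam := by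
          rw [hρμ, hμdef, inv_div]
        rw [hmax, hρinv, abs_of_nonneg (by linarith : 0 ≤ lam - b)]
        have he : (lam - b) / lam = 1 - b / lam := by field_simp
        rw [he]
      · have hmax : max lam b = b := max_eq_right h
        have hμ1 : μ ≤ 1 := by rw [hμdef, div_le_one hb0]; linarith
        have hρμ : ρ = μ⁻¹ := by
          have h2 : 1 ≤ μ⁻¹ := (one_le_inv_iff₀).2 ⟨hμ0, hμ1⟩
          rw [hρdef, max_eq_right (le_trans hμ1 h2)]
        have hρinv : ρ⁻¹ = lam / b := by
          rw [hρμ, inv_inv, hμdef]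
        rw [hmax, hρinv, abs_of_nonpos (by linarith : lam - b ≤ 0)]
        have he : -(lam - b) / b = 1 - lam / b := by field_simp; ring
        rw [he]
    linarith
  have hLHS_le_one : |lam - b| / max lam b ≤ 1 := by
    rw [div_le_one (lt_max_iff.2 (Or.inl hlam0))]
    rcases le_total b lam with h | h
    · rw [abs_of_nonneg (by linarith : 0 ≤ lam - b)]
      calc lam - b ≤ lam := by linarith
        _ ≤ max lam b := le_max_left _ _
    · rw [abs_of_nonpos (by linarith : lam - b ≤ 0)]
      calc -(lam - b) = b - lam := by ring
        _ ≤ b := by linarith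
        _ ≤ max lam b := le_max_right _ _
  -- endgame
  rcases le_or_gt Δr (28 * ω * Real.log K) with hA | hB
  · -- trivial case: RHS ≥ 1
    have hRHS1 : 1 ≤ 28 * ω * Δr⁻¹ * Real.log K := by
      rw [show 28 * ω * Δr⁻¹ * Real.log K = (28 * ω * Real.log K) / Δr by ring]
      rw [le_div_iff₀ hΔ0]
      linarith
    exact le_trans hLHS_le_one (by linarith)
  · -- main case
    have hlogρ : Real.log ρ ≤ 28 * ω * Δr⁻¹ * Real.log K := by
      rcases eq_or_lt_of_le hρ1 with hρeq | hρgt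
      · rw [← hρeq, Real.log_one]
        positivity
      · -- minimal n with K ≤ ρ^n
        have hex : ∃ n : ℕ, K ≤ ρ ^ n := by
          obtain ⟨n, hn⟩ := pow_unbounded_of_one_lt K hρgt
          exact ⟨n, hn.le⟩
        set n := Nat.find hex with hndef
        have hn : K ≤ ρ ^ n := Nat.find_spec hex
        -- from keyN: n ≥ Δr/(14ω)
        have hσn : L * r * σ ^ n ≤ Δr / 2 := by
          have h1 : σ ^ n = (ρ ^ n)⁻¹ := by rw [hσρ, inv_pow]
          have h2 : (ρ ^ n)⁻¹ ≤ K⁻¹ := by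
            apply inv_anti₀ hK0 hn
          have h3 : L * r * (ρ ^ n)⁻¹ ≤ L * r * K⁻¹ := by
            apply mul_le_mul_of_nonneg_left h2 (by positivity)
          have h4 : L * r * K⁻¹ = Δr / 2 := by
            rw [hKdef]
            field_simp
          rw [h1]; linarith
        have hnge : Δr / (14 * ω) ≤ (n : ℝ) := by
          have := keyN n
          rw [div_le_iff₀ (by positivity)]
          nlinarith
        have hlogKn : 2 * Real.log K < Δr / (14 * ω) := by
          rw [lt_div_iff₀ (by positivity)]
          nlinarith
        have hn1 : (1 : ℝ) < (n : ℝ) := by nlinarith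
        have hn2 : 2 ≤ n := by
          have : 1 < n := by exact_mod_cast hn1
          omega
        have hmin : ρ ^ (n - 1) < K :=
          not_le.mp (Nat.find_min hex (by omega : n - 1 < n))
        have hcast : ((n - 1 : ℕ) : ℝ) = (n : ℝ) - 1 := by
          have : 1 ≤ n := by omega
          push_cast [this]
          ring
        have hlogpow : ((n : ℝ) - 1) * Real.log ρ ≤ Real.log K := by
          have h1 : Real.log (ρ ^ (n - 1)) ≤ Real.log K :=
            Real.log_le_log (pow_pos hρ0 _) hmin.le
          rw [Real.log_pow, hcast] at h1
          exact h1
        have hn1pos : (0 : ℝ) < (n : ℝ) - 1 := by linarith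
        have hstep1 : Real.log ρ ≤ Real.log K / ((n : ℝ) - 1) := by
          rw [le_div_iff₀ hn1pos]
          linarith [hlogpow]
        have hnhalf : Δr / (28 * ω) ≤ (n : ℝ) - 1 := by
          have h1 : Δr / (28 * ω) ≤ (n : ℝ) / 2 := by
            rw [div_le_div_iff₀ (by positivity) (by norm_num : (0:ℝ) < 2)]
            have := hnge
            rw [div_le_iff₀ (by positivity)] at this
            linarith
          have hn2' : (2:ℝ) ≤ (n:ℝ) := by exact_mod_cast hn2
          linarith
        have hc0 : (0:ℝ) < Δr / (28 * ω) := by positivity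
        have hstep2 : Real.log K / ((n : ℝ) - 1) ≤ Real.log K / (Δr / (28 * ω)) :=
          div_le_div_of_nonneg_left hlogK0.le hc0 hnhalf
        have heq : Real.log K / (Δr / (28 * ω)) = 28 * ω * Δr⁻¹ * Real.log K := by
          field_simp
        linarith
    linarith [hLHS_logρ, hlogρ]
end

section
/- Let N ≥ 1, let v₁, …, v_N ∈ ℝ, let 0 < b ≤ 0.45 and B ≥ 0.75, and let ω₃ ∈ (0, 1/50]. Call an index i typical if b ≤ |v_i| ≤ B. Let E be a binary relation on {1, …, N} such that: (P1) if i is typical and |v_j| ≥ |v_i|, then E(i, j); (P2) if i is typical and E(i, j), then |v_j| ≥ |v_i|(1 - ω₃). Assume the counting bounds: #{i : i typical} ≥ 0.98·N, #{i : |v_i| ≤ 0.75} ≥ 0.53·N, and #{i : |v_i| ≤ 0.46} ≤ 0.37·N. Then every index j with 0.4·N ≤ #{i : E(i, j)} ≤ 0.5·N satisfies 0.45 ≤ |v_j| ≤ 0.75. -/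
lemma aux_inter (N : ℕ) (s t : Set (Fin N)) :
    (s.ncard : ℝ) + t.ncard ≤ N + (s ∩ t).ncard := by
  have h1 : (s ∪ t).ncard + (s ∩ t).ncard = s.ncard + t.ncard :=
    Set.ncard_union_add_ncard_inter s t (Set.toFinite s) (Set.toFinite t)
  have h2 : (s ∪ t).ncard ≤ N := by
    have := Set.ncard_le_ncard (Set.subset_univ (s ∪ t)) (Set.finite_univ)
    simpa [Set.ncard_univ] using this
  have := h1 ▸ (Nat.add_le_add_right h2 (s ∩ t).ncard)
  calc (s.ncard : ℝ) + t.ncard = ((s.ncard + t.ncard : ℕ) : ℝ) := by push_cast; ring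
    _ ≤ ((N + (s ∩ t).ncard : ℕ) : ℝ) := by exact_mod_cast this
    _ = N + (s ∩ t).ncard := by push_cast; ring

/-- (Order-statistics argument of the typical-scale search.) Let
`v₁, …, v_N ∈ ℝ`, `0 < b ≤ 0.45`, `B ≥ 0.75`, `ω₃ ∈ (0, 1/50]`, and call `i` typical if
`b ≤ |v_i| ≤ B`. Suppose a relation `E` satisfies: (P1) `i` typical and `|v_j| ≥ |v_i|`
imply `E i j`; (P2) `i` typical and `E i j` imply `|v_j| ≥ |v_i|(1 - ω₃)`. Assume
`#{typical i} ≥ 0.98 N`, `#{i : |v_i| ≤ 0.75} ≥ 0.53 N`, `#{i : |v_i| ≤ 0.46} ≤ 0.37 N`.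
Then every `j` with `0.4 N ≤ #{i : E i j} ≤ 0.5 N` satisfies `0.45 ≤ |v_j| ≤ 0.75`. -/
theorem stmt14 (N : ℕ) (hN : 1 ≤ N) (v : Fin N → ℝ) (b B ω₃ : ℝ)
    (hb : 0 < b) (hb' : b ≤ 0.45) (hB : 0.75 ≤ B)
    (hω₃ : 0 < ω₃) (hω₃' : ω₃ ≤ 1 / 50)
    (E : Fin N → Fin N → Prop)
    (hP1 : ∀ i j : Fin N, b ≤ |v i| → |v i| ≤ B → |v i| ≤ |v j| → E i j)
    (hP2 : ∀ i j : Fin N, b ≤ |v i| → |v i| ≤ B → E i j → |v i| * (1 - ω₃) ≤ |v j|)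
    (hcount1 : (0.98 : ℝ) * N ≤ ({i : Fin N | b ≤ |v i| ∧ |v i| ≤ B} : Set (Fin N)).ncard)
    (hcount2 : (0.53 : ℝ) * N ≤ ({i : Fin N | |v i| ≤ 0.75} : Set (Fin N)).ncard)
    (hcount3 : (({i : Fin N | |v i| ≤ 0.46} : Set (Fin N)).ncard : ℝ) ≤ 0.37 * N) :
    ∀ j : Fin N,
      (0.4 : ℝ) * N ≤ ({i : Fin N | E i j} : Set (Fin N)).ncard →
      (({i : Fin N | E i j} : Set (Fin N)).ncard : ℝ) ≤ 0.5 * N →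
      0.45 ≤ |v j| ∧ |v j| ≤ 0.75 := by
  intro j h1 h2
  have hNpos : (1 : ℝ) ≤ N := by exact_mod_cast hN
  set T : Set (Fin N) := {i : Fin N | b ≤ |v i| ∧ |v i| ≤ B}
  set Ej : Set (Fin N) := {i : Fin N | E i j}
  constructor
  · -- lower bound
    by_contra hlt
    push_neg at hlt
    -- T ∩ Ej ⊆ {|v i| ≤ 0.46}
    have hsub : T ∩ Ej ⊆ {i : Fin N | |v i| ≤ 0.46} := by
      rintro i ⟨⟨hib, hiB⟩, hiE⟩
      have h3 := hP2 i j hib hiB hiE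
      have h98 : |v i| * 0.98 ≤ |v i| * (1 - ω₃) := by
        have : (0.98 : ℝ) ≤ 1 - ω₃ := by linarith
        exact mul_le_mul_of_nonneg_left this (abs_nonneg _)
      have : |v i| * 0.98 ≤ 0.45 := by linarith [le_of_lt hlt]
      show |v i| ≤ 0.46
      nlinarith
    have hmono : ((T ∩ Ej).ncard : ℝ) ≤ ({i : Fin N | |v i| ≤ 0.46} : Set (Fin N)).ncard := by
      exact_mod_cast Set.ncard_le_ncard hsub (Set.toFinite _)
    have := aux_inter N T Ej
    linarith
  · -- upper bound
    by_contra hgt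
    push_neg at hgt
    have hsub : T ∩ {i : Fin N | |v i| ≤ 0.75} ⊆ Ej := by
      rintro i ⟨⟨hib, hiB⟩, hi75⟩
      exact hP1 i j hib hiB (le_trans hi75 (le_of_lt hgt))
    have hmono : ((T ∩ {i : Fin N | |v i| ≤ 0.75}).ncard : ℝ) ≤ (Ej.ncard : ℝ) := by
      exact_mod_cast Set.ncard_le_ncard hsub (Set.toFinite _)
    have := aux_inter N T {i : Fin N | |v i| ≤ 0.75}
    linarith
end
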